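/- arXiv:1109.4669 — 2 statements merged into one kernel-verified Lean document; each statement's English description precedes it below -/
import Mathlib

section
/- For R = [[2,0],[1,2]], B = {(0,0),(1,0),(0,3),(1,3)}, L = {(0,0),(1,0),(0,1),(1,1)}, the pair (B,L) is a Hadamard pair, Π(B) = ℤ × (1/3)ℤ, and the point (0, 2/3) does not belong to SΠ(B) = ∪_{l∈L}(R^TΠ(B)+l); hence ∩_{n≥0} SⁿΠ(B) is a proper subset of Π(B). -/
open MeasureTheory Complex Finset Matrix
open scoped ENNReal NNReal

noncomputable def tauMap {d : ℕ} (Rr : Matrix (Fin d) (Fin d) ℝ) (b : Fin d → ℤ)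
    (x : Fin d → ℝ) : Fin d → ℝ :=
  Rr⁻¹.mulVec (x + fun i => (b i : ℝ))

noncomputable def measOp {d : ℕ} (Rr : Matrix (Fin d) (Fin d) ℝ) (B : Finset (Fin d → ℤ))
    (μ : Measure (Fin d → ℝ)) : Measure (Fin d → ℝ) :=
  (B.card : ℝ≥0∞)⁻¹ • ∑ b ∈ B, Measure.map (tauMap Rr b) μ

noncomputable def fourierTf {d : ℕ} (μ : Measure (Fin d → ℝ)) (x : Fin d → ℝ) : ℂ :=
  ∫ t, Complex.exp (2 * Real.pi * Complex.I * ((∑ i, x i * t i : ℝ) : ℂ)) ∂μ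

noncomputable def expFn {d : ℕ} (l : Fin d → ℝ) (x : Fin d → ℝ) : ℂ :=
  Complex.exp (2 * Real.pi * Complex.I * ((∑ i, l i * x i : ℝ) : ℂ))

/-- `Λ` is a spectrum for `μ`: the exponentials `e_λ`, `λ ∈ Λ`, form an orthonormal
basis of `L²(μ)`, expressed as orthonormality together with completeness. -/
def IsSpectral {d : ℕ} (μ : Measure (Fin d → ℝ)) (Λ : Set (Fin d → ℝ)) : Prop :=
  (∀ l1 ∈ Λ, ∀ l2 ∈ Λ, l1 ≠ l2 →
      ∫ x, expFn l1 x * (starRingEnd ℂ) (expFn l2 x) ∂μ = 0) ∧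
  (∀ f : (Fin d → ℝ) → ℂ, MemLp f 2 μ →
      (∀ l ∈ Λ, ∫ x, f x * (starRingEnd ℂ) (expFn l x) ∂μ = 0) → f =ᵐ[μ] 0)

noncomputable def hadamardMatrix {d : ℕ} (R : Matrix (Fin d) (Fin d) ℤ)
    (B L : Finset (Fin d → ℤ)) : Matrix {b // b ∈ B} {l // l ∈ L} ℂ :=
  fun b l => (Real.sqrt B.card : ℂ)⁻¹ * Complex.exp (2 * Real.pi * Complex.I *
    ((∑ i, ((R.map ((↑) : ℤ → ℝ))⁻¹.mulVec (fun j => ((b : Fin d → ℤ) j : ℝ))) i *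
      ((l : Fin d → ℤ) i : ℝ) : ℝ) : ℂ))

def IsHadamardPair {d : ℕ} (R : Matrix (Fin d) (Fin d) ℤ)
    (B L : Finset (Fin d → ℤ)) : Prop :=
  (hadamardMatrix R B L)ᴴ * hadamardMatrix R B L = 1 ∧
  hadamardMatrix R B L * (hadamardMatrix R B L)ᴴ = 1

def PiSet {d : ℕ} (B : Finset (Fin d → ℤ)) : Set (Fin d → ℝ) :=
  {γ | ∀ b ∈ B, ∃ m : ℤ, (∑ i, γ i * (b i : ℝ)) = (m : ℝ)}

/-- `SΛ = ∪_{l∈L} (R^T Λ + l)`. -/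
def specOp {d : ℕ} (R : Matrix (Fin d) (Fin d) ℤ) (L : Finset (Fin d → ℤ))
    (Λ : Set (Fin d → ℝ)) : Set (Fin d → ℝ) :=
  ⋃ l ∈ L, (fun γ => ((R.map ((↑) : ℤ → ℝ))ᵀ).mulVec γ + fun i => (l i : ℝ)) '' Λ

/-!
The Gram matrix `HᴴH` has entries `(1/4) ∑_{b ∈ B} e(R⁻¹b · (l₂ - l₁))`. As
`B = {0, u, v, u + v}` with `u = (1, 0)`, `v = (0, 3)`, this mask factors as
`(1 + e(R⁻¹u · δ)) (1 + e(R⁻¹v · δ))`, where `R⁻¹u · δ = δ₀/2 - δ₁/4` and `R⁻¹v · δ = 3δ₁/2`.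
For distinct `l₁, l₂ ∈ L = {0, 1}²` one of these lies in `1/2 + ℤ`, so a factor vanishes;
`H` is square, so `HᴴH = 1` also gives `HHᴴ = 1`.

For `γ = (m, k/3) ∈ Π(B)` and `l ∈ ℤ²`, `Rᵀγ + l = (2m + k/3 + l₀, 2k/3 + l₁)`, and equality with
`(0, 2/3)` would force both `3 ∣ k` and `k ≡ 1 (mod 3)`. So `(0, 2/3) ∈ Π(B) \ SΠ(B)`, and the
intersection of the iterates, which lies in `S⁰Π(B) = Π(B)`, misses it.
-/

theorem expFn_add_left {d : ℕ} (a b x : Fin d → ℝ) :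
    expFn (a + b) x = expFn a x * expFn b x := by
  simp only [expFn, ← Complex.exp_add, Pi.add_apply, add_mul, Finset.sum_add_distrib]
  push_cast; ring_nf

theorem expFn_add_right {d : ℕ} (a x y : Fin d → ℝ) :
    expFn a (x + y) = expFn a x * expFn a y := by
  simp only [expFn, ← Complex.exp_add, Pi.add_apply, mul_add, Finset.sum_add_distrib]
  push_cast; ring_nf

theorem expFn_zero_left {d : ℕ} (x : Fin d → ℝ) : expFn 0 x = 1 := by
  simp [expFn]

theorem expFn_zero_right {d : ℕ} (a : Fin d → ℝ) : expFn a 0 = 1 := by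
  simp [expFn]

theorem star_expFn {d : ℕ} (a x : Fin d → ℝ) : star (expFn a x) = expFn a (-x) := by
  rw [expFn, expFn, Complex.star_def, ← Complex.exp_conj]
  simp only [map_mul, Complex.conj_ofReal, Complex.conj_I, map_ofNat, Pi.neg_apply, mul_neg,
    Finset.sum_neg_distrib]
  push_cast; ring_nf

theorem expFn_eq_neg_one {d : ℕ} {a x : Fin d → ℝ} (n : ℤ) (h : ∑ i, a i * x i = n + 1 / 2) :
    expFn a x = -1 := by
  rw [expFn, h, show (2 * Real.pi * Complex.I * (((n : ℝ) + 1 / 2 : ℝ) : ℂ))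
      = n * (2 * Real.pi * Complex.I) + Real.pi * Complex.I by push_cast; ring,
    Complex.exp_add, Complex.exp_int_mul_two_pi_mul_I, Complex.exp_pi_mul_I, one_mul]

section HadamardPair

variable {d : ℕ} (R : Matrix (Fin d) (Fin d) ℤ) (B L : Finset (Fin d → ℤ))

theorem hadamardMatrix_apply (b : {b // b ∈ B}) (l : {l // l ∈ L}) :
    hadamardMatrix R B L b l = (Real.sqrt #B : ℂ)⁻¹ *
      expFn ((R.map ((↑) : ℤ → ℝ))⁻¹ *ᵥ fun j => (b.1 j : ℝ)) fun i => (l.1 i : ℝ) :=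
  rfl

theorem conjTranspose_hadamardMatrix_mul_apply (l₁ l₂ : {l // l ∈ L}) :
    ((hadamardMatrix R B L)ᴴ * hadamardMatrix R B L) l₁ l₂ = (#B : ℂ)⁻¹ *
      ∑ b ∈ B, expFn ((R.map ((↑) : ℤ → ℝ))⁻¹ *ᵥ fun j => (b j : ℝ))
        ((fun i => (l₂.1 i : ℝ)) - fun i => (l₁.1 i : ℝ)) := by
  have hsq : star (Real.sqrt #B : ℂ)⁻¹ * (Real.sqrt #B : ℂ)⁻¹ = (#B : ℂ)⁻¹ := by
    rw [star_inv₀, Complex.star_def, Complex.conj_ofReal, ← mul_inv, ← Complex.ofReal_mul,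
      Real.mul_self_sqrt (Nat.cast_nonneg _), Complex.ofReal_natCast]
  simp only [Matrix.mul_apply, Matrix.conjTranspose_apply, hadamardMatrix_apply, star_mul',
    star_expFn, mul_mul_mul_comm _ (expFn (d := d) _ _), hsq, ← expFn_add_right, neg_add_eq_sub,
    Finset.mul_sum]
  rw [← Finset.sum_coe_sort B]

theorem isHadamardPair_of_sum_expFn_eq_zero (hcard : #L = #B)
    (horth : ∀ l₁ ∈ L, ∀ l₂ ∈ L, l₁ ≠ l₂ →
      ∑ b ∈ B, expFn ((R.map ((↑) : ℤ → ℝ))⁻¹ *ᵥ fun j => (b j : ℝ))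
        ((fun i => (l₂ i : ℝ)) - fun i => (l₁ i : ℝ)) = 0) :
    IsHadamardPair R B L := by
  have hleft : (hadamardMatrix R B L)ᴴ * hadamardMatrix R B L = 1 := by
    ext l₁ l₂
    rw [conjTranspose_hadamardMatrix_mul_apply, Matrix.one_apply]
    split_ifs with h
    · have hB : (#B : ℂ) ≠ 0 := by
        rw [← hcard]; exact_mod_cast (Finset.card_pos.2 ⟨_, l₁.2⟩).ne'
      simp [h, expFn_zero_right, inv_mul_cancel₀ hB]
    · rw [horth _ l₁.2 _ l₂.2 (Subtype.coe_injective.ne h), mul_zero]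
  refine ⟨hleft, (Matrix.mul_eq_one_comm_of_equiv ?_).1 hleft⟩
  exact Fintype.equivOfCardEq (by simp [hcard])

end HadamardPair

theorem sum_expFn_mulVec_parallelogram {d : ℕ} (M : Matrix (Fin d) (Fin d) ℝ)
    {u v : Fin d → ℤ} (hu : u ≠ 0) (hv : v ≠ 0) (huv : u ≠ v) (hsum : u + v ≠ 0)
    (x : Fin d → ℝ) :
    ∑ b ∈ ({0, u, v, u + v} : Finset (Fin d → ℤ)), expFn (M *ᵥ fun j => (b j : ℝ)) x =
      (1 + expFn (M *ᵥ fun j => (u j : ℝ)) x) * (1 + expFn (M *ᵥ fun j => (v j : ℝ)) x) := by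
  have hcast : (fun j => ((u + v) j : ℝ)) = (fun j => (u j : ℝ)) + fun j => (v j : ℝ) := by
    ext j; simp
  rw [Finset.sum_insert (by simp [hu.symm, hv.symm, hsum.symm]),
    Finset.sum_insert (by simp [huv, hv]), Finset.sum_insert (by simpa using hu),
    Finset.sum_singleton, hcast, Matrix.mulVec_add, expFn_add_left]
  simp only [Pi.zero_apply, Int.cast_zero, ← Pi.zero_def, Matrix.mulVec_zero, expFn_zero_left]
  ring

theorem Set.iInter_iterate_ssubset {α : Type*} {f : Set α → Set α} {s : Set α} {x : α}
    (hxs : x ∈ s) (hxf : x ∉ f s) : ⋂ n : ℕ, f^[n] s ⊂ s := by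
  refine Set.ssubset_iff_of_subset (Set.iInter_subset_of_subset 0 subset_rfl) |>.2 ⟨x, hxs, ?_⟩
  exact fun hx => hxf (Set.mem_iInter.1 hx 1)

namespace CounterexampleDimTwo

theorem inv_map_matrix_two_zero_one_two :
    ((!![2, 0; 1, 2] : Matrix (Fin 2) (Fin 2) ℤ).map ((↑) : ℤ → ℝ))⁻¹ = !![1/2, 0; -(1/4), 1/2] := by
  apply Matrix.inv_eq_right_inv
  ext i j
  fin_cases i <;> fin_cases j <;> norm_num [Matrix.mul_apply, Fin.sum_univ_two]

theorem sum_expFn_eq_zero_of_odd {δ : Fin 2 → ℤ}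
    (hδ : Odd (δ 1) ∨ (δ 1 = 0 ∧ Odd (δ 0))) :
    ∑ b ∈ ({![0, 0], ![1, 0], ![0, 3], ![1, 3]} : Finset (Fin 2 → ℤ)),
      expFn (((!![2, 0; 1, 2] : Matrix (Fin 2) (Fin 2) ℤ).map ((↑) : ℤ → ℝ))⁻¹ *ᵥ
        fun j => (b j : ℝ)) (fun i => (δ i : ℝ)) = 0 := by
  have hB : ({![0, 0], ![1, 0], ![0, 3], ![1, 3]} : Finset (Fin 2 → ℤ)) =
      {0, ![1, 0], ![0, 3], ![1, 0] + ![0, 3]} := by decide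
  rw [hB, sum_expFn_mulVec_parallelogram _ (by decide) (by decide) (by decide) (by decide),
    inv_map_matrix_two_zero_one_two, mul_eq_zero]
  simp only [add_eq_zero_iff_eq_neg']
  rcases hδ with ⟨k, hk⟩ | ⟨h1, k, hk⟩
  · right
    refine expFn_eq_neg_one (3 * k + 1) ?_
    simp only [mulVec_fin_two, Fin.sum_univ_two, of_apply, cons_val', cons_val_zero,
      cons_val_one, cons_val_fin_one, hk]
    push_cast
    ring
  · left
    refine expFn_eq_neg_one k ?_
    simp only [mulVec_fin_two, Fin.sum_univ_two, of_apply, cons_val', cons_val_zero,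
      cons_val_one, cons_val_fin_one, hk, h1]
    push_cast
    ring

theorem piSet_eq :
    PiSet ({![0, 0], ![1, 0], ![0, 3], ![1, 3]} : Finset (Fin 2 → ℤ)) =
      {γ : Fin 2 → ℝ | (∃ m : ℤ, γ 0 = (m : ℝ)) ∧ (∃ m : ℤ, γ 1 = (m : ℝ) / 3)} := by
  ext γ
  simp only [PiSet, Set.mem_ofPred_eq, Finset.mem_insert, Finset.mem_singleton, forall_eq_or_imp,
    forall_eq, Fin.sum_univ_two, cons_val_zero, cons_val_one]
  push_cast
  constructor
  · rintro ⟨-, ⟨m, hm⟩, ⟨k, hk⟩, -⟩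
    exact ⟨⟨m, by linarith⟩, ⟨k, by linarith⟩⟩
  · rintro ⟨⟨m, hm⟩, ⟨k, hk⟩⟩
    exact ⟨⟨0, by simp⟩, ⟨m, by simp [hm]⟩, ⟨k, by simp [hk]⟩, ⟨m + k, by simp [hm, hk]⟩⟩

theorem not_mem_specOp_piSet (L : Finset (Fin 2 → ℤ)) :
    ![(0 : ℝ), 2 / 3] ∉ specOp !![2, 0; 1, 2] L
      (PiSet ({![0, 0], ![1, 0], ![0, 3], ![1, 3]} : Finset (Fin 2 → ℤ))) := by
  simp only [specOp, piSet_eq, Set.mem_iUnion, Set.mem_image, not_exists, not_and]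
  rintro l - γ ⟨⟨m, hm⟩, ⟨k, hk⟩⟩ heq
  have h0 := congrFun heq 0
  have h1 := congrFun heq 1
  simp only [mulVec_fin_two, transpose_apply, map_apply, of_apply, cons_val', cons_val_zero,
    cons_val_fin_one, cons_val_one, Int.cast_ofNat, Int.cast_one, Int.cast_zero, hm, hk, one_mul,
    zero_mul, zero_add, Pi.add_apply] at h0 h1
  have e0 : ((6 * m + k + 3 * l 0 : ℤ) : ℝ) = 0 := by push_cast; linarith
  have e1 : ((2 * k + 3 * l 1 : ℤ) : ℝ) = 2 := by push_cast; linarith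
  norm_cast at e0 e1
  omega

end CounterexampleDimTwo

open CounterexampleDimTwo in
theorem counterexample_dim_two :
    let R : Matrix (Fin 2) (Fin 2) ℤ := !![2, 0; 1, 2]
    let B : Finset (Fin 2 → ℤ) := {![0, 0], ![1, 0], ![0, 3], ![1, 3]}
    let L : Finset (Fin 2 → ℤ) := {![0, 0], ![1, 0], ![0, 1], ![1, 1]}
    IsHadamardPair R B L ∧
    PiSet B = {γ : Fin 2 → ℝ | (∃ m : ℤ, γ 0 = (m : ℝ)) ∧ (∃ m : ℤ, γ 1 = (m : ℝ) / 3)} ∧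
    ![(0 : ℝ), 2 / 3] ∉ specOp R L (PiSet B) ∧
    (⋂ n : ℕ, (specOp R L)^[n] (PiSet B)) ⊂ PiSet B := by
  intro R B L
  have hL : ∀ l₁ ∈ L, ∀ l₂ ∈ L, l₁ ≠ l₂ →
      Odd ((l₂ - l₁) 1) ∨ ((l₂ - l₁) 1 = 0 ∧ Odd ((l₂ - l₁) 0)) := by decide
  have hadamard : IsHadamardPair R B L := by
    refine isHadamardPair_of_sum_expFn_eq_zero R B L (by decide) fun l₁ h₁ l₂ h₂ hne => ?_
    convert sum_expFn_eq_zero_of_odd (hL l₁ h₁ l₂ h₂ hne) using 3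
    ext i; simp
  have hmem : ![(0 : ℝ), 2 / 3] ∈ PiSet B := by
    rw [piSet_eq]
    exact ⟨⟨0, by simp⟩, ⟨2, by norm_num⟩⟩
  exact ⟨hadamard, piSet_eq, not_mem_specOp_piSet L,
    Set.iInter_iterate_ssubset hmem (not_mem_specOp_piSet L)⟩
end

section
/- Suppose Borel probability measures μ_n on ℝ^d converge weakly to μ, and Λ_n ⊂ ℝ^d are such that the exponentials E(Λ_n) form Riesz basic sequences in L²(μ_n) with bounds A_n, B_n satisfying A_n → A > 0 and B_n → B < ∞. Then for the set Λ = ∩_n Λ_n (if nonempty), E(Λ) is a Riesz basic sequence in L²(μ) with lower bound A and upper bound B. -/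
open MeasureTheory Complex Finset Matrix
open scoped ENNReal NNReal

/-- The exponentials `E(Λ)` form a Riesz basic sequence in `L²(μ)` with bounds `A ≤ B`:
`A²∑|c_λ|² ≤ ‖∑ c_λ e_λ‖² ≤ B²∑|c_λ|²` for all finitely supported coefficients. -/
def RieszBounds {d : ℕ} (μ : Measure (Fin d → ℝ)) (Λ : Set (Fin d → ℝ)) (A B : ℝ) : Prop :=
  ∀ F : Finset (Fin d → ℝ), ↑F ⊆ Λ → ∀ c : (Fin d → ℝ) → ℂ,
    A ^ 2 * ∑ l ∈ F, ‖c l‖ ^ 2 ≤ ∫ x, ‖∑ l ∈ F, c l * expFn l x‖ ^ 2 ∂μ ∧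
    ∫ x, ‖∑ l ∈ F, c l * expFn l x‖ ^ 2 ∂μ ≤ B ^ 2 * ∑ l ∈ F, ‖c l‖ ^ 2

/-! Each side of the Riesz inequality for a fixed finite `F ⊆ ⋂ Λₙ` and coefficients `c` is an
integral of the bounded continuous function `‖∑ c_λ e_λ‖²`, so it converges under weak
convergence of `μₙ`, and the bounds `Aₙ², Bₙ²` pass to the limit. -/

theorem norm_expFn {d : ℕ} (l x : Fin d → ℝ) : ‖expFn l x‖ = 1 := by
  rw [expFn, show 2 * Real.pi * I * ((∑ i, l i * x i : ℝ) : ℂ)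
      = ((2 * Real.pi * ∑ i, l i * x i : ℝ) : ℂ) * I by push_cast; ring]
  exact norm_exp_ofReal_mul_I _

@[fun_prop]
theorem continuous_expFn {d : ℕ} (l : Fin d → ℝ) : Continuous (expFn l) := by
  unfold expFn
  fun_prop

theorem norm_sum_mul_expFn_le {d : ℕ} (F : Finset (Fin d → ℝ)) (c : (Fin d → ℝ) → ℂ)
    (x : Fin d → ℝ) : ‖∑ l ∈ F, c l * expFn l x‖ ≤ ∑ l ∈ F, ‖c l‖ :=
  (norm_sum_le _ _).trans_eq <| Finset.sum_congr rfl fun l _ => by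
    rw [norm_mul, norm_expFn, mul_one]

noncomputable def expPolyNormSq {d : ℕ} (F : Finset (Fin d → ℝ)) (c : (Fin d → ℝ) → ℂ) :
    BoundedContinuousFunction (Fin d → ℝ) ℝ :=
  BoundedContinuousFunction.ofNormedAddCommGroup (fun x => ‖∑ l ∈ F, c l * expFn l x‖ ^ 2)
    (by fun_prop) ((∑ l ∈ F, ‖c l‖) ^ 2) fun x => by
      rw [Real.norm_of_nonneg (by positivity)]
      exact pow_le_pow_left₀ (norm_nonneg _) (norm_sum_mul_expFn_le F c x) 2

theorem expPolyNormSq_apply {d : ℕ} (F : Finset (Fin d → ℝ)) (c : (Fin d → ℝ) → ℂ)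
    (x : Fin d → ℝ) : expPolyNormSq F c x = ‖∑ l ∈ F, c l * expFn l x‖ ^ 2 :=
  rfl

theorem RieszBounds.mono {d : ℕ} {μ : Measure (Fin d → ℝ)} {Λ Λ' : Set (Fin d → ℝ)}
    {A B : ℝ} (h : RieszBounds μ Λ A B) (hΛ : Λ' ⊆ Λ) : RieszBounds μ Λ' A B :=
  fun F hF => h F (hF.trans hΛ)

theorem RieszBounds.of_tendsto {d : ℕ} {μ : ℕ → Measure (Fin d → ℝ)}
    {ν : Measure (Fin d → ℝ)}
    (hconv : ∀ f : BoundedContinuousFunction (Fin d → ℝ) ℝ,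
      Filter.Tendsto (fun n => ∫ x, f x ∂(μ n)) Filter.atTop (nhds (∫ x, f x ∂ν)))
    {Λ : Set (Fin d → ℝ)} {A B : ℕ → ℝ} {A₀ B₀ : ℝ}
    (hRiesz : ∀ n, RieszBounds (μ n) Λ (A n) (B n))
    (hA : Filter.Tendsto A Filter.atTop (nhds A₀))
    (hB : Filter.Tendsto B Filter.atTop (nhds B₀)) :
    RieszBounds ν Λ A₀ B₀ := by
  intro F hF c
  have hlim := hconv (expPolyNormSq F c)
  simp only [expPolyNormSq_apply] at hlim
  exact ⟨le_of_tendsto_of_tendsto' ((hA.pow 2).mul_const _) hlim fun n => (hRiesz n F hF c).1,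
    le_of_tendsto_of_tendsto' hlim ((hB.pow 2).mul_const _) fun n => (hRiesz n F hF c).2⟩

theorem riesz_limit_general {d : ℕ} (μ : ℕ → Measure (Fin d → ℝ))
    (ν : Measure (Fin d → ℝ))
    (hconv : ∀ f : BoundedContinuousFunction (Fin d → ℝ) ℝ,
      Filter.Tendsto (fun n => ∫ x, f x ∂(μ n)) Filter.atTop (nhds (∫ x, f x ∂ν)))
    (Λ : ℕ → Set (Fin d → ℝ)) (A B : ℕ → ℝ) (A₀ B₀ : ℝ)
    (hRiesz : ∀ n, RieszBounds (μ n) (Λ n) (A n) (B n))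
    (hA : Filter.Tendsto A Filter.atTop (nhds A₀))
    (hB : Filter.Tendsto B Filter.atTop (nhds B₀)) :
    RieszBounds ν (⋂ n, Λ n) A₀ B₀ :=
  RieszBounds.of_tendsto hconv (fun n => (hRiesz n).mono (Set.iInter_subset Λ n)) hA hB

theorem riesz_limit {d : ℕ} (μ : ℕ → Measure (Fin d → ℝ))
    [∀ n, IsProbabilityMeasure (μ n)]
    (ν : Measure (Fin d → ℝ)) [IsProbabilityMeasure ν]
    (hconv : ∀ f : BoundedContinuousFunction (Fin d → ℝ) ℝ,
      Filter.Tendsto (fun n => ∫ x, f x ∂(μ n)) Filter.atTop (nhds (∫ x, f x ∂ν)))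
    (Λ : ℕ → Set (Fin d → ℝ)) (A B : ℕ → ℝ) (A₀ B₀ : ℝ)
    (hRiesz : ∀ n, RieszBounds (μ n) (Λ n) (A n) (B n))
    (hA : Filter.Tendsto A Filter.atTop (nhds A₀)) (hA₀ : 0 < A₀)
    (hB : Filter.Tendsto B Filter.atTop (nhds B₀))
    (hne : (⋂ n, Λ n).Nonempty) :
    RieszBounds ν (⋂ n, Λ n) A₀ B₀ :=
  riesz_limit_general μ ν hconv Λ A B A₀ B₀ hRiesz hA hB
end
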